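/- For all s > d/2, there exists C > 0 such that for all σ ≥ 0, the space H^{σ,s}(T^d) is an algebra: ‖u₁u₂‖_{H^{σ,s}} ≤ C ‖u₁‖_{H^{σ,s}} ‖u₂‖_{H^{σ,s}} for all u₁, u₂ ∈ H^{σ,s}(T^d). -/

import Mathlib

/-!
For `σ ≥ 0` the subadditivity of `|ξ|` gives `e^{σ|ξ|} ≤ e^{σ|ξ - ζ|} e^{σ|ζ|}`, so after
multiplying the moduli of the Fourier coefficients by `e^{σ|ξ|}` the estimate reduces to the
case `σ = 0` for nonnegative sequences, with the same constant. There one splits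
`⟨ξ⟩^s ≤ 2^s (⟨ξ - ζ⟩^s + ⟨ζ⟩^s)`, applies Young's inequality `ℓ² * ℓ¹ ⊆ ℓ²` to each half and
bounds the `ℓ¹` factor by Cauchy–Schwarz, `‖v‖_{ℓ¹}² ≤ (∑ ⟨ζ⟩^{-2s}) ‖⟨·⟩^s v‖_{ℓ²}²`. The last
sum is finite because `⟨ζ⟩^{-2s}` is dominated by a product of one-dimensional terms
`(1 + ζᵢ²)^{-t}` with `t > 1/2`.
-/

open scoped ENNReal BigOperators

/-- Euclidean norm of a lattice point `ξ ∈ ℤ^d`. -/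
noncomputable def latNorm {d : ℕ} (ξ : Fin d → ℤ) : ℝ :=
  Real.sqrt (∑ i, ((ξ i : ℝ)) ^ 2)

/-- Japanese bracket `⟨ξ⟩ = (1+|ξ|²)^{1/2}`. -/
noncomputable def latJap {d : ℕ} (ξ : Fin d → ℤ) : ℝ :=
  Real.sqrt (1 + ∑ i, ((ξ i : ℝ)) ^ 2)

/-- Weight `e^{2σ|ξ|}⟨ξ⟩^{2s}` of the analytic Sobolev space `H^{σ,s}(T^d)`. -/
noncomputable def hWeight {d : ℕ} (σ s : ℝ) (ξ : Fin d → ℤ) : ℝ≥0∞ :=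
  ENNReal.ofReal (Real.exp (2 * σ * latNorm ξ) * (latJap ξ) ^ (2 * s))

/-- Squared `H^{σ,s}(T^d)` norm of a function given by its Fourier
coefficients `c : ℤ^d → ℂ`. -/
noncomputable def hNormSq {d : ℕ} (σ s : ℝ) (c : (Fin d → ℤ) → ℂ) : ℝ≥0∞ :=
  ∑' ξ, hWeight σ s ξ * (‖c ξ‖₊ : ℝ≥0∞) ^ 2

/-- `H^{σ,s}(T^d)` norm. -/
noncomputable def hNorm {d : ℕ} (σ s : ℝ) (c : (Fin d → ℤ) → ℂ) : ℝ≥0∞ :=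
  (hNormSq σ s c) ^ (1/2 : ℝ)

/-- Convolution of Fourier coefficients: this represents the pointwise
product of the corresponding functions on `T^d` (up to the fixed
normalization factor `(2π)^{-d}`, harmless for the estimates below). -/
noncomputable def conv {d : ℕ} (f g : (Fin d → ℤ) → ℂ) : (Fin d → ℤ) → ℂ :=
  fun ξ => ∑' ζ, f (ξ - ζ) * g ζ

namespace ENNReal

theorem tsum_mul_sq_le {ι : Type*} (f g : ι → ℝ≥0∞) :
    (∑' i, f i * g i) ^ 2 ≤ (∑' i, f i ^ 2) * ∑' i, g i ^ 2 := by
  -- Hölder for the counting measure; with the discrete σ-algebra every function is measurable.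
  let _ : MeasurableSpace ι := ⊤
  have h := lintegral_mul_le_Lp_mul_Lq MeasureTheory.Measure.count Real.HolderConjugate.two_two
    measurable_from_top.aemeasurable measurable_from_top.aemeasurable (f := f) (g := g)
  simp only [Pi.mul_apply, MeasureTheory.lintegral_count' measurable_from_top, rpow_two] at h
  calc (∑' i, f i * g i) ^ 2
      ≤ ((∑' i, f i ^ 2) ^ (1 / 2 : ℝ) * (∑' i, g i ^ 2) ^ (1 / 2 : ℝ)) ^ 2 := by gcongr
    _ = (∑' i, f i ^ 2) * ∑' i, g i ^ 2 := by
      rw [mul_pow, ← rpow_natCast, ← rpow_natCast (_ ^ _), ← rpow_mul, ← rpow_mul]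
      norm_num

theorem add_sq_le_two_mul (a b : ℝ≥0∞) : (a + b) ^ 2 ≤ 2 * (a ^ 2 + b ^ 2) := by
  induction a <;> induction b
  case coe.coe a b => exact_mod_cast add_sq_le (a := a) (b := b)
  all_goals simp

theorem tsum_pi_prod {β : Type*} (d : ℕ) (g : β → ℝ≥0∞) :
    ∑' ζ : Fin d → β, ∏ i, g (ζ i) = (∑' n, g n) ^ d := by
  induction d with
  | zero => simp
  | succ d ih =>
    rw [← (Fin.consEquiv fun _ ↦ β).tsum_eq]
    simp only [Fin.consEquiv_apply, Fin.prod_univ_succ, Fin.cons_zero, Fin.cons_succ]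
    rw [ENNReal.tsum_prod' (f := fun (p : β × (Fin d → β)) ↦ g p.1 * ∏ i, g (p.2 i))]
    simp only [ENNReal.tsum_mul_left, ih, ENNReal.tsum_mul_right, pow_succ']

end ENNReal

-- In `ℝ≥0∞` a `tsum` never takes a junk value, so no summability hypotheses are needed.
noncomputable def econv {α : Type*} [AddGroup α] (F G : α → ℝ≥0∞) (ξ : α) : ℝ≥0∞ :=
  ∑' ζ, F (ξ - ζ) * G ζ

theorem econv_comm {α : Type*} [AddCommGroup α] (F G : α → ℝ≥0∞) : econv F G = econv G F := by
  ext ξ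
  rw [econv, econv, ← (Equiv.subLeft ξ).tsum_eq]
  simp [mul_comm]

theorem tsum_econv_sq_le {α : Type*} [AddGroup α] (F G : α → ℝ≥0∞) :
    ∑' ξ, econv F G ξ ^ 2 ≤ (∑' ζ, G ζ) ^ 2 * ∑' ξ, F ξ ^ 2 := by
  have hG (ζ : α) : (G ζ ^ (2⁻¹ : ℝ)) ^ 2 = G ζ := ENNReal.rpow_inv_natCast_pow two_ne_zero _
  have pointwise (ξ : α) : econv F G ξ ^ 2 ≤ (∑' ζ, G ζ) * ∑' ζ, F (ξ - ζ) ^ 2 * G ζ := by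
    calc econv F G ξ ^ 2 = (∑' ζ, (F (ξ - ζ) * G ζ ^ (2⁻¹ : ℝ)) * G ζ ^ (2⁻¹ : ℝ)) ^ 2 := by
          simp only [econv, mul_assoc, ← sq, hG]
      _ ≤ (∑' ζ, (F (ξ - ζ) * G ζ ^ (2⁻¹ : ℝ)) ^ 2) * ∑' ζ, (G ζ ^ (2⁻¹ : ℝ)) ^ 2 :=
          ENNReal.tsum_mul_sq_le _ _
      _ = (∑' ζ, G ζ) * ∑' ζ, F (ξ - ζ) ^ 2 * G ζ := by
          simp only [mul_pow, hG]
          rw [mul_comm]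
  have shift (ζ : α) : ∑' ξ, F (ξ - ζ) ^ 2 = ∑' ξ, F ξ ^ 2 :=
    (Equiv.subRight ζ).tsum_eq fun ξ ↦ F ξ ^ 2
  calc ∑' ξ, econv F G ξ ^ 2 ≤ ∑' ξ, (∑' ζ, G ζ) * ∑' ζ, F (ξ - ζ) ^ 2 * G ζ :=
        ENNReal.tsum_le_tsum pointwise
    _ = (∑' ζ, G ζ) * ∑' ζ, (∑' ξ, F (ξ - ζ) ^ 2) * G ζ := by
        rw [ENNReal.tsum_mul_left, ENNReal.tsum_comm]
        simp only [ENNReal.tsum_mul_right]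
    _ = (∑' ζ, G ζ) ^ 2 * ∑' ξ, F ξ ^ 2 := by
        simp only [shift, ENNReal.tsum_mul_left]
        ring

theorem summable_one_add_sq_rpow_neg {t : ℝ} (ht : 1 / 2 < t) :
    Summable fun n : ℤ ↦ (1 + (n : ℝ) ^ 2) ^ (-t) := by
  refine (Real.summable_abs_int_rpow (b := 2 * t) (by linarith)).of_norm_bounded_eventually ?_
  filter_upwards [Filter.eventually_cofinite_ne 0] with n hn
  have hn' : 0 < |(n : ℝ)| := abs_pos.2 (Int.cast_ne_zero.2 hn)
  rw [Real.norm_of_nonneg (by positivity), show -(2 * t) = 2 * -t by ring,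
    Real.rpow_mul hn'.le, Real.rpow_two, sq_abs]
  exact Real.rpow_le_rpow_of_nonpos (by positivity : (0 : ℝ) < (n : ℝ) ^ 2) (by linarith)
    (by linarith)

theorem prod_one_add_le_pow {d : ℕ} (x : Fin d → ℝ) (hx : ∀ i, 0 ≤ x i) :
    ∏ i, (1 + x i) ≤ (1 + ∑ i, x i) ^ d := by
  calc ∏ i, (1 + x i) ≤ ∏ _i : Fin d, (1 + ∑ i, x i) :=
        Finset.prod_le_prod (fun i _ ↦ by linarith [hx i]) fun i _ ↦
          by linarith [Finset.single_le_sum (fun j _ ↦ hx j) (Finset.mem_univ i)]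
    _ = (1 + ∑ i, x i) ^ d := by simp

section Lattice

variable {d : ℕ}

theorem latNorm_eq_norm (ξ : Fin d → ℤ) :
    latNorm ξ = ‖WithLp.toLp 2 (fun i ↦ (ξ i : ℝ))‖ := by
  simp [latNorm, EuclideanSpace.norm_eq]

theorem latNorm_nonneg (ξ : Fin d → ℤ) : 0 ≤ latNorm ξ := Real.sqrt_nonneg _

theorem latNorm_add_le (x y : Fin d → ℤ) : latNorm (x + y) ≤ latNorm x + latNorm y := by
  simp only [latNorm_eq_norm, Pi.add_apply, Int.cast_add]
  exact norm_add_le (WithLp.toLp 2 fun i ↦ (x i : ℝ)) (WithLp.toLp 2 fun i ↦ (y i : ℝ))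

theorem latJap_eq_sqrt (ξ : Fin d → ℤ) : latJap ξ = √(1 + latNorm ξ ^ 2) := by
  rw [latJap, latNorm, Real.sq_sqrt (by positivity)]

theorem latJap_pos (ξ : Fin d → ℤ) : 0 < latJap ξ := Real.sqrt_pos.2 (by positivity)

theorem latNorm_le_latJap (ξ : Fin d → ℤ) : latNorm ξ ≤ latJap ξ :=
  Real.sqrt_le_sqrt (by linarith)

theorem latJap_add_le (x y : Fin d → ℤ) : latJap (x + y) ≤ latJap x + latJap y := by
  have hx := latNorm_le_latJap x
  have hy := latNorm_le_latJap y
  have hsq : latJap x ^ 2 = 1 + latNorm x ^ 2 := by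
    rw [latJap_eq_sqrt, Real.sq_sqrt (by positivity)]
  have hxy : latNorm (x + y) ^ 2 ≤ (latNorm x + latNorm y) ^ 2 :=
    pow_le_pow_left₀ (latNorm_nonneg _) (latNorm_add_le x y) 2
  rw [latJap_eq_sqrt (x + y), Real.sqrt_le_left (add_pos (latJap_pos x) (latJap_pos y)).le]
  nlinarith [mul_le_mul hx hy (latNorm_nonneg y) (latJap_pos x).le,
    mul_self_le_mul_self (latNorm_nonneg y) hy]

end Lattice

section Weights

variable {d : ℕ}

noncomputable def japWeight (s : ℝ) (ξ : Fin d → ℤ) : ℝ≥0∞ :=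
  ENNReal.ofReal (latJap ξ ^ s)

noncomputable def expWeight (σ : ℝ) (ξ : Fin d → ℤ) : ℝ≥0∞ :=
  ENNReal.ofReal (Real.exp (σ * latNorm ξ))

theorem hWeight_eq (σ s : ℝ) (ξ : Fin d → ℤ) :
    hWeight σ s ξ = (expWeight σ ξ * japWeight s ξ) ^ 2 := by
  have hJ := latJap_pos ξ
  rw [hWeight, expWeight, japWeight, ← ENNReal.ofReal_mul (Real.exp_nonneg _),
    ← ENNReal.ofReal_pow (mul_nonneg (Real.exp_nonneg _) (Real.rpow_nonneg hJ.le _)), mul_pow,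
    ← Real.exp_nat_mul, ← Real.rpow_natCast (latJap ξ ^ s), ← Real.rpow_mul hJ.le]
  congr 3 <;> push_cast <;> ring

theorem expWeight_add_le {σ : ℝ} (hσ : 0 ≤ σ) (x y : Fin d → ℤ) :
    expWeight σ (x + y) ≤ expWeight σ x * expWeight σ y := by
  rw [expWeight, expWeight, expWeight, ← ENNReal.ofReal_mul (Real.exp_nonneg _), ← Real.exp_add,
    ← mul_add]
  gcongr
  exact latNorm_add_le x y

theorem latJap_rpow_add_le {s : ℝ} (hs : 0 ≤ s) (x y : Fin d → ℤ) :
    latJap (x + y) ^ s ≤ 2 ^ s * (latJap x ^ s + latJap y ^ s) := by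
  have hx := latJap_pos x
  have hy := latJap_pos y
  calc latJap (x + y) ^ s ≤ (2 * max (latJap x) (latJap y)) ^ s := by
        gcongr
        · exact (latJap_pos _).le
        · rw [two_mul]
          exact (latJap_add_le x y).trans (add_le_add (le_max_left _ _) (le_max_right _ _))
    _ = 2 ^ s * max (latJap x ^ s) (latJap y ^ s) := by
        rw [Real.mul_rpow zero_le_two (le_max_of_le_left hx.le), Real.rpow_max hx.le hy.le hs]
    _ ≤ 2 ^ s * (latJap x ^ s + latJap y ^ s) := by
        gcongr
        exact max_le_add_of_nonneg (by positivity) (by positivity)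

theorem japWeight_add_le {s : ℝ} (hs : 0 ≤ s) (x y : Fin d → ℤ) :
    japWeight s (x + y) ≤ ENNReal.ofReal (2 ^ s) * (japWeight s x + japWeight s y) := by
  have hJ (ξ : Fin d → ℤ) : 0 ≤ latJap ξ ^ s := Real.rpow_nonneg (latJap_pos ξ).le s
  rw [japWeight, japWeight, japWeight, ← ENNReal.ofReal_add (hJ x) (hJ y),
    ← ENNReal.ofReal_mul (by positivity)]
  exact ENNReal.ofReal_le_ofReal (latJap_rpow_add_le hs x y)

theorem japWeight_neg_mul_japWeight (s : ℝ) (ξ : Fin d → ℤ) :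
    japWeight (-s) ξ * japWeight s ξ = 1 := by
  rw [japWeight, japWeight, ← ENNReal.ofReal_mul (Real.rpow_nonneg (latJap_pos ξ).le _),
    ← Real.rpow_add (latJap_pos ξ), neg_add_cancel, Real.rpow_zero, ENNReal.ofReal_one]

theorem japWeight_neg_sq_le_prod {s t : ℝ} (ht : 0 ≤ t) (hdt : d * t ≤ s) (ξ : Fin d → ℤ) :
    japWeight (-s) ξ ^ 2 ≤ ∏ i, ENNReal.ofReal ((1 + (ξ i : ℝ) ^ 2) ^ (-t)) := by
  have hS : 1 ≤ 1 + ∑ i, (ξ i : ℝ) ^ 2 := by simp only [le_add_iff_nonneg_right]; positivity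
  rw [japWeight, ← ENNReal.ofReal_pow (Real.rpow_nonneg (latJap_pos ξ).le _),
    ← ENNReal.ofReal_prod_of_nonneg (fun i _ ↦ by positivity)]
  refine ENNReal.ofReal_le_ofReal ?_
  rw [Real.finsetProd_rpow _ _ (fun i _ ↦ by positivity)]
  calc (latJap ξ ^ (-s)) ^ 2 = (1 + ∑ i, (ξ i : ℝ) ^ 2) ^ (-s) := by
        rw [latJap, Real.sqrt_eq_rpow, ← Real.rpow_mul (by positivity), ← Real.rpow_natCast,
          ← Real.rpow_mul (by positivity)]
        congr 1; push_cast; ring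
    _ ≤ ((1 + ∑ i, (ξ i : ℝ) ^ 2) ^ d) ^ (-t) := by
        rw [← Real.rpow_natCast, ← Real.rpow_mul (by positivity)]
        exact Real.rpow_le_rpow_of_exponent_le hS (by linarith)
    _ ≤ (∏ i, (1 + (ξ i : ℝ) ^ 2)) ^ (-t) :=
        Real.rpow_le_rpow_of_nonpos (by positivity)
          (prod_one_add_le_pow _ fun i ↦ sq_nonneg _) (by linarith)

theorem tsum_japWeight_neg_sq_ne_top {s : ℝ} (hs : (d : ℝ) / 2 < s) :
    ∑' ξ : Fin d → ℤ, japWeight (-s) ξ ^ 2 ≠ ⊤ := by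
  obtain ⟨t, ht, hdt⟩ : ∃ t : ℝ, 1 / 2 < t ∧ d * t ≤ s := by
    rcases eq_or_ne d 0 with rfl | hd
    · exact ⟨1, by norm_num, by simp; linarith⟩
    · refine ⟨s / d, ?_, (mul_div_cancel₀ s (by positivity)).le⟩
      rw [lt_div_iff₀ (by positivity)]; linarith
  have h1 : ∑' n : ℤ, ENNReal.ofReal ((1 + (n : ℝ) ^ 2) ^ (-t)) ≠ ⊤ := by
    rw [← ENNReal.ofReal_tsum_of_nonneg (fun n ↦ by positivity) (summable_one_add_sq_rpow_neg ht)]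
    exact ENNReal.ofReal_ne_top
  refine ne_top_of_le_ne_top ?_ (ENNReal.tsum_le_tsum (japWeight_neg_sq_le_prod (by linarith) hdt))
  rw [ENNReal.tsum_pi_prod d fun n : ℤ ↦ ENNReal.ofReal ((1 + (n : ℝ) ^ 2) ^ (-t))]
  exact ENNReal.pow_ne_top h1

end Weights

section Sobolev

variable {d : ℕ}

noncomputable def sobolevSq (s : ℝ) (F : (Fin d → ℤ) → ℝ≥0∞) : ℝ≥0∞ :=
  ∑' ξ, (japWeight s ξ * F ξ) ^ 2

theorem sobolevSq_mono {s : ℝ} {F G : (Fin d → ℤ) → ℝ≥0∞} (h : F ≤ G) :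
    sobolevSq s F ≤ sobolevSq s G :=
  ENNReal.tsum_le_tsum fun ξ ↦ by gcongr; exact h ξ

theorem tsum_sq_le_mul_sobolevSq (s : ℝ) (F : (Fin d → ℤ) → ℝ≥0∞) :
    (∑' ξ, F ξ) ^ 2 ≤ (∑' ξ : Fin d → ℤ, japWeight (-s) ξ ^ 2) * sobolevSq s F := by
  calc (∑' ξ, F ξ) ^ 2 = (∑' ξ, japWeight (-s) ξ * (japWeight s ξ * F ξ)) ^ 2 := by
        simp only [← mul_assoc, japWeight_neg_mul_japWeight, one_mul]
    _ ≤ _ := ENNReal.tsum_mul_sq_le _ _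

theorem japWeight_mul_econv_le {s : ℝ} (hs : 0 ≤ s) (F G : (Fin d → ℤ) → ℝ≥0∞)
    (ξ : Fin d → ℤ) :
    japWeight s ξ * econv F G ξ ≤
      ENNReal.ofReal (2 ^ s) * (econv (japWeight s * F) G ξ + econv (japWeight s * G) F ξ) := by
  rw [econv_comm (japWeight s * G), econv, econv, econv, ← ENNReal.tsum_add,
    ← ENNReal.tsum_mul_left, ← ENNReal.tsum_mul_left]
  refine ENNReal.tsum_le_tsum fun ζ ↦ ?_
  calc japWeight s ξ * (F (ξ - ζ) * G ζ)
      ≤ ENNReal.ofReal (2 ^ s) * (japWeight s (ξ - ζ) + japWeight s ζ) * (F (ξ - ζ) * G ζ) := by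
        gcongr
        simpa only [sub_add_cancel] using japWeight_add_le hs (ξ - ζ) ζ
    _ = _ := by simp only [Pi.mul_apply]; ring

theorem sobolevSq_econv_le {s : ℝ} (hs : 0 ≤ s) (F G : (Fin d → ℤ) → ℝ≥0∞) :
    sobolevSq s (econv F G) ≤ 4 * ENNReal.ofReal (2 ^ s) ^ 2 *
      (∑' ξ : Fin d → ℤ, japWeight (-s) ξ ^ 2) * sobolevSq s F * sobolevSq s G := by
  set K := ∑' ξ : Fin d → ℤ, japWeight (-s) ξ ^ 2
  set A := econv (japWeight s * F) G
  set B := econv (japWeight s * G) F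
  have hA : ∑' ξ, A ξ ^ 2 ≤ K * sobolevSq s G * sobolevSq s F :=
    (tsum_econv_sq_le _ _).trans (mul_le_mul_left (tsum_sq_le_mul_sobolevSq s G) _)
  have hB : ∑' ξ, B ξ ^ 2 ≤ K * sobolevSq s F * sobolevSq s G :=
    (tsum_econv_sq_le _ _).trans (mul_le_mul_left (tsum_sq_le_mul_sobolevSq s F) _)
  calc sobolevSq s (econv F G)
      ≤ ∑' ξ, (ENNReal.ofReal (2 ^ s) * (A ξ + B ξ)) ^ 2 :=
        ENNReal.tsum_le_tsum fun ξ ↦ pow_le_pow_left' (japWeight_mul_econv_le hs F G ξ) 2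
    _ ≤ ∑' ξ, ENNReal.ofReal (2 ^ s) ^ 2 * (2 * (A ξ ^ 2 + B ξ ^ 2)) :=
        ENNReal.tsum_le_tsum fun ξ ↦ by rw [mul_pow]; gcongr; exact ENNReal.add_sq_le_two_mul _ _
    _ = 2 * ENNReal.ofReal (2 ^ s) ^ 2 * (∑' ξ, A ξ ^ 2 + ∑' ξ, B ξ ^ 2) := by
        rw [ENNReal.tsum_mul_left, ENNReal.tsum_mul_left, ENNReal.tsum_add]; ring
    _ ≤ 2 * ENNReal.ofReal (2 ^ s) ^ 2 *
          (K * sobolevSq s G * sobolevSq s F + K * sobolevSq s F * sobolevSq s G) := by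
        gcongr
    _ = _ := by ring

end Sobolev

section AnalyticSobolev

variable {d : ℕ}

theorem hNormSq_eq_sobolevSq (σ s : ℝ) (u : (Fin d → ℤ) → ℂ) :
    hNormSq σ s u = sobolevSq s fun ξ ↦ expWeight σ ξ * ‖u ξ‖ₑ := by
  refine tsum_congr fun ξ ↦ ?_
  rw [hWeight_eq, ← enorm_eq_nnnorm]
  ring

theorem expWeight_mul_enorm_conv_le {σ : ℝ} (hσ : 0 ≤ σ) (u₁ u₂ : (Fin d → ℤ) → ℂ)
    (ξ : Fin d → ℤ) :
    expWeight σ ξ * ‖conv u₁ u₂ ξ‖ₑ ≤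
      econv (fun ξ ↦ expWeight σ ξ * ‖u₁ ξ‖ₑ) (fun ξ ↦ expWeight σ ξ * ‖u₂ ξ‖ₑ) ξ := by
  calc expWeight σ ξ * ‖conv u₁ u₂ ξ‖ₑ
      ≤ expWeight σ ξ * ∑' ζ, ‖u₁ (ξ - ζ)‖ₑ * ‖u₂ ζ‖ₑ := by
        gcongr
        simpa only [conv, enorm_mul] using enorm_tsum_le_tsum_enorm (f := fun ζ ↦ u₁ (ξ - ζ) * u₂ ζ)
    _ = ∑' ζ, expWeight σ (ξ - ζ + ζ) * (‖u₁ (ξ - ζ)‖ₑ * ‖u₂ ζ‖ₑ) := by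
        simp only [sub_add_cancel, ENNReal.tsum_mul_left]
    _ ≤ _ := ENNReal.tsum_le_tsum fun ζ ↦ by
        grw [expWeight_add_le hσ]
        exact (mul_mul_mul_comm _ _ _ _).le

theorem hNorm_conv_le {σ s : ℝ} (hσ : 0 ≤ σ) (hs : 0 ≤ s) (u₁ u₂ : (Fin d → ℤ) → ℂ) :
    hNorm σ s (conv u₁ u₂) ≤ (4 * ENNReal.ofReal (2 ^ s) ^ 2 *
      ∑' ξ : Fin d → ℤ, japWeight (-s) ξ ^ 2) ^ (1 / 2 : ℝ) * hNorm σ s u₁ * hNorm σ s u₂ := by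
  have hSq : hNormSq σ s (conv u₁ u₂) ≤ 4 * ENNReal.ofReal (2 ^ s) ^ 2 *
      (∑' ξ : Fin d → ℤ, japWeight (-s) ξ ^ 2) * hNormSq σ s u₁ * hNormSq σ s u₂ := by
    simp only [hNormSq_eq_sobolevSq]
    exact (sobolevSq_mono (expWeight_mul_enorm_conv_le hσ u₁ u₂)).trans (sobolevSq_econv_le hs _ _)
  simp only [hNorm, ← ENNReal.mul_rpow_of_nonneg _ _ (by norm_num : (0 : ℝ) ≤ 1 / 2)]
  exact ENNReal.rpow_le_rpow hSq (by norm_num)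

end AnalyticSobolev

/-- For `s > d/2`, the space `H^{σ,s}(T^d)` is an algebra,
with a constant uniform in `σ ≥ 0`. -/
theorem statement9 (d : ℕ) (s : ℝ) (hs : (d : ℝ) / 2 < s) :
    ∃ C : ℝ, 0 < C ∧ ∀ σ : ℝ, 0 ≤ σ → ∀ u₁ u₂ : (Fin d → ℤ) → ℂ,
      hNormSq σ s u₁ ≠ ⊤ → hNormSq σ s u₂ ≠ ⊤ →
      hNorm σ s (conv u₁ u₂) ≤ ENNReal.ofReal C * hNorm σ s u₁ * hNorm σ s u₂ := by
  have hs₀ : 0 ≤ s := le_trans (by positivity) hs.le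
  set M := 4 * ENNReal.ofReal (2 ^ s) ^ 2 * ∑' ξ : Fin d → ℤ, japWeight (-s) ξ ^ 2
  have hM : M ≠ ⊤ := ENNReal.mul_ne_top
    (ENNReal.mul_ne_top (by norm_num) (ENNReal.pow_ne_top ENNReal.ofReal_ne_top))
    (tsum_japWeight_neg_sq_ne_top hs)
  have hM_rpow : M ^ (1 / 2 : ℝ) = ENNReal.ofReal (M.toReal ^ (1 / 2 : ℝ)) := by
    rw [← ENNReal.ofReal_rpow_of_nonneg ENNReal.toReal_nonneg (by norm_num),
      ENNReal.ofReal_toReal hM]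
  refine ⟨M.toReal ^ (1 / 2 : ℝ) + 1, by positivity, fun σ hσ u₁ u₂ _ _ ↦ ?_⟩
  grw [hNorm_conv_le hσ hs₀ u₁ u₂, hM_rpow]
  gcongr
  exact le_add_of_nonneg_right zero_le_one
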